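/- arXiv:2307.16388 — 5 statements merged into one kernel-verified Lean document; each statement's English description precedes it below -/
import Mathlib

section
/- Let H be a Hopf algebra and V a left H-module. Fix c ∈ V. Then the assignment (f ⊗ g) ⊗ e ↦ (f ⊗ g_{(1)}) ⊗_H e · (S(g_{(2)}) c), defined on H ⊗ H ⊗ V and viewed as taking values in (H ⊗ H) ⊗_H V, descends to a well-defined linear map Φ: (H ⊗ H) ⊗_H V → (H ⊗ H) ⊗_H V, i.e., it satisfies Φ(f ⊗ g ⊗ h·e) = Φ(fh_{(1)} ⊗ gh_{(2)} ⊗ e) for all h ∈ H. -/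
open TensorProduct

noncomputable section

variable (F : Type*) [Field F] [CharZero F]
variable (H : Type*) [Ring H] [HopfAlgebra F H]
variable (V : Type*) [NonUnitalCommRing V] [Module F V] [Module H V]
  [IsScalarTower F H V] [SMulCommClass F H V]
  [IsScalarTower F V V] [SMulCommClass F V V]

/-- action of `H` on `V` as a bilinear map -/
def hAct : H →ₗ[F] V →ₗ[F] V :=
  LinearMap.mk₂ F (· • ·) (fun h h' v => add_smul h h' v)
    (fun r h v => smul_assoc r h v) (fun h v v' => smul_add h v v')
    (fun r h v => (smul_comm r h v).symm)

/-- the balancing submodule defining `(H ⊗ H) ⊗_H V`, where `H` acts on `H ⊗ H`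
on the right via the coproduct. -/
def relSub : Submodule F ((H ⊗[F] H) ⊗[F] V) :=
  Submodule.span F
    {x | ∃ (w : H ⊗[F] H) (h : H) (v : V),
      x = (w * Coalgebra.comul h) ⊗ₜ[F] v - w ⊗ₜ[F] (h • v)}

/-- `k ⊗ e ↦ e * (S(k) • c)` -/
def rmulAct (c : V) : H →ₗ[F] V →ₗ[F] V :=
  LinearMap.mk₂ F (fun k e => e * (HopfAlgebra.antipode (R := F) k • c))
    (fun k k' e => by simp [map_add, add_smul, mul_add])
    (fun r k e => by simp [map_smul, smul_assoc, mul_smul_comm])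
    (fun k e e' => by simp [add_mul])
    (fun r k e => by simp [smul_mul_assoc])

/-- `(f ⊗ g) ⊗ e ↦ (f ⊗ g₍₁₎) ⊗ (e * (S(g₍₂₎) • c))` -/
def Phi (c : V) : (H ⊗[F] H) ⊗[F] V →ₗ[F] (H ⊗[F] H) ⊗[F] V :=
  (TensorProduct.map LinearMap.id (TensorProduct.lift (rmulAct F H V c)))
    ∘ₗ (TensorProduct.assoc F (H ⊗[F] H) H V).toLinearMap
    ∘ₗ (TensorProduct.map (TensorProduct.assoc F H H H).symm.toLinearMap LinearMap.id)
    ∘ₗ (TensorProduct.map (TensorProduct.map LinearMap.id Coalgebra.comul) LinearMap.id)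

/-!
Since `Δ` is multiplicative and `S` antimultiplicative,
`Φ(((f ⊗ g) Δh) ⊗ e) = Σ (f h₁ ⊗ g₁ h₂) ⊗ e · S(h₃) S(g₂) c`,
and coassociativity regroups this as `Σ ((f ⊗ g₁) Δh₁) ⊗ e · S(h₂) c'` with `c' = S(g₂) c`.
Balancing moves `h₁` to the right, where the differential-algebra law gives
`h₁ (e · S(h₂) c') = (h₁ e)(h₂ S(h₃) c') = (h e) c'`, because `Σ h₁ ⊗ h₂ S(h₃) = h ⊗ 1`.
The result is `Φ((f ⊗ g) ⊗ h e)`.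
-/

open Coalgebra HopfAlgebra

section HopfAlgebra

variable {R A : Type*} [CommSemiring R] [Semiring A]

lemma tmul_mul_comul [Bialgebra R A] {ι : Type*} {k : A} (r : Repr R k ι) (x y : A) :
    (x ⊗ₜ[R] y) * comul k = ∑ i ∈ r.index, (x * r.left i) ⊗ₜ[R] (y * r.right i) := by
  simp only [← r.eq, Finset.mul_sum, Algebra.TensorProduct.tmul_mul_tmul]

lemma sum_sum_tmul_mul_antipode_eq_tmul_one [HopfAlgebra R A] {ι : Type*} {κ : ι → Type*}
    {a : A} (r : Repr R a ι) (r₁ : ∀ i, Repr R (r.left i) (κ i)) :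
    ∑ i ∈ r.index, ∑ m ∈ (r₁ i).index,
      (r₁ i).left m ⊗ₜ[R] ((r₁ i).right m * antipode R (r.right i)) = a ⊗ₜ[R] 1 := by
  have coassoc := congrArg
    (LinearMap.lTensor A (LinearMap.mul' R A ∘ₗ LinearMap.lTensor A (antipode R)))
    (sum_tmul_tmul_eq r r₁ fun i => ℛ R (r.right i))
  simp only [map_sum, LinearMap.lTensor_tmul, LinearMap.comp_apply, LinearMap.mul'_apply]
    at coassoc
  simp_rw [coassoc, ← tmul_sum, sum_mul_antipode_eq_algebraMap_counit]
  have counit_right :=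
    congrArg (LinearMap.lTensor A (Algebra.linearMap R A)) (sum_tmul_counit_eq r)
  simpa only [map_sum, LinearMap.lTensor_tmul, Algebra.linearMap_apply, map_one] using counit_right

end HopfAlgebra

section Balanced

variable {K A M : Type*} [Field K] [Ring A] [HopfAlgebra K A] [NonUnitalCommRing M] [Module K M]
  [Module A M]

lemma mkQ_mul_comul_tmul (w : A ⊗[K] A) (k : A) (v : M) :
    (relSub K A M).mkQ ((w * comul k) ⊗ₜ[K] v) = (relSub K A M).mkQ (w ⊗ₜ[K] (k • v)) :=
  (Submodule.Quotient.eq _).2 (Submodule.subset_span ⟨w, k, v, rfl⟩)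

variable [IsScalarTower K A M] [IsScalarTower K M M] [SMulCommClass K M M]

lemma phi_tmul_tmul (c : M) (x : A) {ι : Type*} {y : A} (r : Repr K y ι) (e : M) :
    Phi K A M c ((x ⊗ₜ[K] y) ⊗ₜ[K] e)
      = ∑ j ∈ r.index, (x ⊗ₜ[K] r.left j) ⊗ₜ[K] (e * (antipode K (r.right j) • c)) := by
  simp [Phi, ← r.eq, tmul_sum, sum_tmul, rmulAct]

lemma phi_mul_comul_tmul (c : M) (x : A) {ι κ : Type*} {y k : A} (ry : Repr K y ι)
    (rk : Repr K k κ) (e : M) :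
    Phi K A M c (((x ⊗ₜ[K] y) * comul k) ⊗ₜ[K] e)
      = ∑ j ∈ ry.index, ∑ i ∈ rk.index, ((x ⊗ₜ[K] ry.left j) * comul (rk.left i)) ⊗ₜ[K]
          (e * (antipode K (rk.right i) • antipode K (ry.right j) • c)) := by
  let r₁ i := ℛ K (rk.left i)
  let r₂ i := ℛ K (rk.right i)
  calc _ = ∑ i ∈ rk.index, ∑ j ∈ ry.index, ∑ m ∈ (r₂ i).index,
          ((x * rk.left i) ⊗ₜ[K] (ry.left j * (r₂ i).left m)) ⊗ₜ[K]
            (e * (antipode K ((r₂ i).right m) • antipode K (ry.right j) • c)) := by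
        rw [tmul_mul_comul rk, sum_tmul, map_sum]
        refine Finset.sum_congr rfl fun i _ => ?_
        rw [phi_tmul_tmul c _ (ry.mul (r₂ i)), Repr.mul_index, Finset.sum_product]
        simp only [Repr.mul_left, Repr.mul_right, antipode_mul_antidistrib, mul_smul]
    _ = ∑ j ∈ ry.index, ∑ i ∈ rk.index, ∑ m ∈ (r₂ i).index,
          ((x * rk.left i) ⊗ₜ[K] (ry.left j * (r₂ i).left m)) ⊗ₜ[K]
            (e * (antipode K ((r₂ i).right m) • antipode K (ry.right j) • c)) := Finset.sum_comm
    _ = _ := by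
        refine Finset.sum_congr rfl fun j _ => ?_
        have coassoc := congrArg ((TensorProduct.assoc K A A M).symm.toLinearMap
            ∘ₗ TensorProduct.map (LinearMap.mulLeft K x)
              (TensorProduct.map (LinearMap.mulLeft K (ry.left j))
                ((rmulAct K A M (antipode K (ry.right j) • c)).flip e)))
          (sum_tmul_tmul_eq rk r₁ r₂)
        simp only [map_sum, LinearMap.comp_apply, TensorProduct.map_tmul, LinearEquiv.coe_coe,
          TensorProduct.assoc_symm_tmul, LinearMap.mulLeft_apply, LinearMap.flip_apply, rmulAct,
          LinearMap.mk₂_apply] at coassoc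
        simp only [← coassoc, tmul_mul_comul (r₁ _), sum_tmul]

end Balanced

section DifferentialAlgebra

variable (K A M : Type*) [Field K] [Ring A] [HopfAlgebra K A] [NonUnitalCommRing M] [Module K M]
  [Module A M] [IsScalarTower K A M] [SMulCommClass K A M] [IsScalarTower K M M]
  [SMulCommClass K M M]

def IsDifferentialAlgebra : Prop :=
  ∀ (h : A) (a b : M),
    h • (a * b)
      = LinearMap.mul' K M
          (TensorProduct.map (TensorProduct.lift (hAct K A M)) (TensorProduct.lift (hAct K A M))
            (TensorProduct.tensorTensorTensorComm K A A M M (comul h ⊗ₜ[K] (a ⊗ₜ[K] b))))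

variable {K A M}

lemma IsDifferentialAlgebra.smul_mul (hM : IsDifferentialAlgebra K A M) {ι : Type*} {h : A}
    (r : Repr K h ι) (u v : M) :
    h • (u * v) = ∑ i ∈ r.index, (r.left i • u) * (r.right i • v) := by
  simp [hM h u v, ← r.eq, sum_tmul, hAct]

lemma IsDifferentialAlgebra.sum_smul_mul_antipode_smul (hM : IsDifferentialAlgebra K A M)
    {ι : Type*} {h : A} (r : Repr K h ι) (e c : M) :
    ∑ i ∈ r.index, r.left i • (e * (antipode K (r.right i) • c)) = (h • e) * c := by
  let act (u v : M) : A ⊗[K] A →ₗ[K] M :=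
    LinearMap.mul' K M ∘ₗ TensorProduct.map ((hAct K A M).flip u) ((hAct K A M).flip v)
  have act_tmul (u v : M) (p q : A) : act u v (p ⊗ₜ q) = (p • u) * (q • v) := by
    simp [act, hAct]
  calc _ = act e c (∑ i ∈ r.index, ∑ m ∈ (ℛ K (r.left i)).index,
          (ℛ K (r.left i)).left m ⊗ₜ[K] ((ℛ K (r.left i)).right m * antipode K (r.right i))) := by
        simp only [map_sum, act_tmul, mul_smul, hM.smul_mul (ℛ K (r.left _))]
    _ = (h • e) * c := by rw [sum_sum_tmul_mul_antipode_eq_tmul_one, act_tmul, one_smul]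

lemma IsDifferentialAlgebra.mkQ_sum_mul_comul_tmul (hM : IsDifferentialAlgebra K A M)
    (w : A ⊗[K] A) {ι : Type*} {k : A} (r : Repr K k ι) (e c : M) :
    (relSub K A M).mkQ
        (∑ i ∈ r.index, (w * comul (r.left i)) ⊗ₜ[K] (e * (antipode K (r.right i) • c)))
      = (relSub K A M).mkQ (w ⊗ₜ[K] ((k • e) * c)) := by
  rw [map_sum]
  simp only [mkQ_mul_comul_tmul]
  rw [← map_sum, ← tmul_sum, hM.sum_smul_mul_antipode_smul]

end DifferentialAlgebra

theorem stmt3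
    -- `V` is an `H`-differential algebra: `h • (a b) = (h₍₁₎ • a)(h₍₂₎ • b)`
    (hdiff : ∀ (h : H) (a b : V),
      h • (a * b)
        = (LinearMap.mul' F V)
            ((TensorProduct.map (TensorProduct.lift (hAct F H V))
                (TensorProduct.lift (hAct F H V)))
              ((TensorProduct.tensorTensorTensorComm F H H V V)
                (Coalgebra.comul h ⊗ₜ[F] (a ⊗ₜ[F] b)))))
    (c : V) :
    ∀ (f g h : H) (e : V),
      (relSub F H V).mkQ (Phi F H V c (((f ⊗ₜ[F] g) * Coalgebra.comul h) ⊗ₜ[F] e))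
        = (relSub F H V).mkQ (Phi F H V c ((f ⊗ₜ[F] g) ⊗ₜ[F] (h • e))) := by
  intro f g h e
  rw [phi_mul_comul_tmul c f (ℛ F g) (ℛ F h), phi_tmul_tmul c f (ℛ F g), map_sum, map_sum]
  exact Finset.sum_congr rfl fun j _ =>
    IsDifferentialAlgebra.mkQ_sum_mul_comul_tmul hdiff _ (ℛ F h) e _
end
end

section
/- Let Γ be a graph on vertices {1,...,M} with a partition into n groups, and let C be an oriented cycle in Γ. Then either the image of C under the edge bijection lies entirely within E(Δₖ(Γ)) for some single group k, or the set of edges of C connecting different groups maps to an oriented cycle in the clasped graph Δ₀(Γ). -/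
/-- An oriented cycle: a nonempty closed directed walk with no repeated edges. -/
def IsOrientedCycle {Edge V : Type*} (ends : Edge → V × V) (es : List Edge) : Prop :=
  es ≠ [] ∧ es.Nodup ∧
    ∀ i : Fin es.length,
      (ends (es.get i)).2
        = (ends (es.get ⟨(i.val + 1) % es.length, Nat.mod_lt _ i.pos⟩)).1

/-! A cycle is a closed walk, and relabelling each vertex by its group keeps it a closed walk.
Deleting the loops of a closed walk (here: the edges inside one group) leaves a closed walk,
which is the clasped cycle unless it is empty; and a walk made of loops only never leaves its
starting vertex, i.e. its group. -/

def IsWalk {Edge V : Type*} (ends : Edge → V × V) : V → List Edge → V → Prop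
  | u, [], v => u = v
  | u, e :: l, v => (ends e).1 = u ∧ IsWalk ends (ends e).2 l v

namespace IsWalk

variable {Edge V : Type*} {ends : Edge → V × V}

theorem iff_cons_map_snd_eq {u v : V} {l : List Edge} :
    IsWalk ends u l v ↔
      u :: l.map (fun e => (ends e).2) = l.map (fun e => (ends e).1) ++ [v] := by
  induction l generalizing u with
  | nil => simp [IsWalk]
  | cons e l ih => simp [IsWalk, ih, eq_comm]

theorem map {W : Type*} (g : V → W) {u v : V} {l : List Edge} (h : IsWalk ends u l v) :
    IsWalk (fun e => (g (ends e).1, g (ends e).2)) (g u) l (g v) := by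
  induction l generalizing u with
  | nil => exact congrArg g h
  | cons e l ih => exact ⟨congrArg g h.1, ih h.2⟩

theorem filter_ne [DecidableEq V] {u v : V} {l : List Edge} (h : IsWalk ends u l v) :
    IsWalk ends u (l.filter fun e => (ends e).1 ≠ (ends e).2) v := by
  induction l generalizing u with
  | nil => exact h
  | cons e l ih =>
    obtain ⟨rfl, h⟩ := h
    by_cases he : (ends e).1 = (ends e).2
    · simpa [List.filter_cons, he] using ih h
    · simpa [List.filter_cons, he, IsWalk] using ih h

theorem eq_of_forall_fst_eq_snd {u v : V} {l : List Edge} (h : IsWalk ends u l v)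
    (hl : ∀ e ∈ l, (ends e).1 = (ends e).2) : ∀ e ∈ l, (ends e).1 = u ∧ (ends e).2 = u := by
  induction l generalizing u with
  | nil => simp
  | cons e l ih =>
    obtain ⟨rfl, h⟩ := h
    have he := hl e List.mem_cons_self
    rw [List.forall_mem_cons, he]
    exact ⟨⟨rfl, rfl⟩, ih h fun e' he' => hl e' (List.mem_cons_of_mem e he')⟩

end IsWalk

theorem forall_snd_get_eq_fst_get_succ_iff {Edge V : Type*} (ends : Edge → V × V)
    (l : List Edge) :
    (∀ i : Fin l.length, (ends (l.get i)).2
        = (ends (l.get ⟨(i.val + 1) % l.length, Nat.mod_lt _ i.pos⟩)).1) ↔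
      l.map (fun e => (ends e).2) = (l.map (fun e => (ends e).1)).rotate 1 := by
  rw [List.ext_getElem_iff]
  simp [List.getElem_rotate, Fin.forall_iff]

theorem isOrientedCycle_iff {Edge V : Type*} {ends : Edge → V × V} {l : List Edge} :
    IsOrientedCycle ends l ↔ l ≠ [] ∧ l.Nodup ∧ ∃ u, IsWalk ends u l u := by
  rw [IsOrientedCycle, forall_snd_get_eq_fst_get_succ_iff]
  cases l <;> simp [IsWalk, IsWalk.iff_cons_map_snd_eq]

theorem stmt9_general (Edge V : Type*) (n : ℕ) (b : V → Fin n)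
    (ends : Edge → V × V)
    (es : List Edge) (hC : IsOrientedCycle ends es) :
    (∃ k : Fin n, ∀ e ∈ es, b (ends e).1 = k ∧ b (ends e).2 = k) ∨
    IsOrientedCycle (fun e => (b (ends e).1, b (ends e).2))
      (es.filter (fun e => decide (b (ends e).1 ≠ b (ends e).2))) := by
  obtain ⟨hne, hnd, u, hu⟩ := isOrientedCycle_iff.mp hC
  have hbu := hu.map b
  by_cases hF : es.filter (fun e => decide (b (ends e).1 ≠ b (ends e).2)) = []
  · left
    refine ⟨b u, hbu.eq_of_forall_fst_eq_snd fun e he => ?_⟩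
    simpa using List.filter_eq_nil_iff.mp hF e he
  · right
    exact isOrientedCycle_iff.mpr ⟨hF, hnd.sublist List.filter_sublist, b u, hbu.filter_ne⟩

/-- Let `Γ` be a directed graph (no tadpoles) with vertices partitioned into `n`
groups via `b : V → Fin n`, and let `C` be an oriented cycle in `Γ`.  Then either
all edges of `C` lie within a single group `k` (so the image of `C` under the edge
bijection lies entirely within `E(Δₖ(Γ))`), or the edges of `C` connecting
different groups form (in order) an oriented cycle in the clasped graph `Δ₀(Γ)`,
whose edges are the crossing edges with endpoints `(b ∘ fst, b ∘ snd)`. -/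
theorem stmt9 (Edge V : Type*) (n : ℕ) (b : V → Fin n)
    (ends : Edge → V × V)
    (htadpole : ∀ e : Edge, (ends e).1 ≠ (ends e).2)
    (es : List Edge) (hC : IsOrientedCycle ends es) :
    (∃ k : Fin n, ∀ e ∈ es, b (ends e).1 = k ∧ b (ends e).2 = k) ∨
    IsOrientedCycle (fun e => (b (ends e).1, b (ends e).2))
      (es.filter (fun e => decide (b (ends e).1 ≠ b (ends e).2))) :=
  stmt9_general Edge V n b ends es hC
end

section
/- The cocomposition of graphs is coassociative: for a graph Γ with vertex set partitioned into M_n blocks of sizes l₁,...,l_{M_n}, which are further grouped into n superblocks of sizes m₁,...,mₙ (so superblock j contains blocks M_{j-1}+1,...,M_j, and has total size K_j = l_{M_{j-1}+1}+...+l_{M_j}), one has: (1) Δ₀^{m₁...mₙ}(Δ₀^{l₁...l_{M_n}}(Γ)) = Δ₀^{K₁...Kₙ}(Γ); (2) Δᵢ^{m₁...mₙ}(Δ₀^{l₁...l_{M_n}}(Γ)) = Δ₀^{l_{M_{i-1}+1}...l_{M_i}}(Δᵢ^{K₁...Kₙ}(Γ)) for each 1 ≤ i ≤ n; (3) Δ_{M_{i-1}+j}^{l₁...l_{M_n}}(Γ)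 = Δⱼ^{l_{M_{i-1}+1}...l_{M_i}}(Δᵢ^{K₁...Kₙ}(Γ)) for 1 ≤ i ≤ n and 1 ≤ j ≤ mᵢ. -/
/-- Clasping a directed multigraph along a map of vertex sets: each fibre of `f` is
identified to a single vertex and only edges between different fibres are kept. -/
def claspM {V B : Type*} [DecidableEq B] (f : V → B) (E : Multiset (V × V)) :
    Multiset (B × B) :=
  (E.map (fun p => (f p.1, f p.2))).filter (fun p => p.1 ≠ p.2)

/-- Extraction of the component of a vertex of `Σ j, α j` lying in the fibre over `i`
(with a default value outside that fibre). -/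
def extr {ι : Type*} [DecidableEq ι] {α : ι → Type*} (i : ι) (d : α i) :
    (Σ j, α j) → α i :=
  fun v => if h : v.1 = i then h ▸ v.2 else d

/-- The induced subgraph of a directed multigraph on the `i`-th group of a partition
of its vertex set `Σ j, α j`. -/
def inducedM {ι : Type*} [DecidableEq ι] {α : ι → Type*} (i : ι) (d : α i)
    (E : Multiset ((Σ j, α j) × (Σ j, α j))) : Multiset (α i × α i) :=
  (E.filter (fun p => p.1.1 = i ∧ p.2.1 = i)).map
    (fun p => (extr i d p.1, extr i d p.2))


private lemma fm_aux {α β : Type*} (p : α → Prop) [DecidablePred p] (f : α → β) (s : Multiset α) :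
    Multiset.filterMap (fun a => if p a then some (f a) else none) s
      = (s.filter p).map f := by
  induction s using Multiset.induction with
  | empty => simp
  | cons a s ih =>
      rw [Multiset.filter_cons]
      by_cases h : p a
      · rw [Multiset.filterMap_cons_some _ _ _ (show _ = some (f a) by simp [h])]
        simp [h, ih]
      · rw [Multiset.filterMap_cons_none _ _ (by simp [h])]
        simp [h, ih]

private lemma claspM_eq {V B : Type*} [DecidableEq B] (f : V → B) (E : Multiset (V × V)) :
    claspM f E = E.filterMap
      (fun p => if f p.1 = f p.2 then none else some (f p.1, f p.2)) := by
  rw [claspM, Multiset.filter_map]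
  have := fm_aux (fun p : V × V => ¬ f p.1 = f p.2)
      (fun p => (f p.1, f p.2)) E
  rw [show (fun a : V × V => if ¬ f a.1 = f a.2 then some (f a.1, f a.2) else none)
      = (fun p : V × V => if f p.1 = f p.2 then none else some (f p.1, f p.2)) from by
      funext a; by_cases h : f a.1 = f a.2 <;> simp [h]] at this
  rw [this]; rfl

private lemma inducedM_eq {ι : Type*} [DecidableEq ι] {α : ι → Type*} (i : ι) (d : α i)
    (E : Multiset ((Σ j, α j) × (Σ j, α j))) :
    inducedM i d E = E.filterMap
      (fun p => if p.1.1 = i ∧ p.2.1 = i then some (extr i d p.1, extr i d p.2) else none) := by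
  rw [inducedM, ← fm_aux]


private lemma extr_same {ι : Type*} [DecidableEq ι] {α : ι → Type*} (i : ι) (d : α i)
    (x : α i) : extr i d ⟨i, x⟩ = x := dif_pos rfl

/-- Coassociativity of the cocomposition of graphs: the vertex set of `Γ` is
partitioned into blocks of sizes `l i j`, grouped into `n` superblocks of sizes
`m i` (encoded as the iterated sigma type `Σ i, Σ j, Fin (l i j)`; superblock `i`
has total size `K i = ∑ j, l i j`).  Then:
(1) `Δ₀ᵐ(Δ₀ˡ(Γ)) = Δ₀ᴷ(Γ)`;
(2) `Δᵢᵐ(Δ₀ˡ(Γ)) = Δ₀(Δᵢᴷ(Γ))` for each `i`;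
(3) `Δ_{M_{i-1}+j}ˡ(Γ) = Δⱼ(Δᵢᴷ(Γ))` for all `i`, `j`. -/
theorem stmt10 (n : ℕ) (m : Fin n → ℕ) (hm : ∀ i, 0 < m i)
    (l : (i : Fin n) → Fin (m i) → ℕ) (hl : ∀ i j, 0 < l i j)
    (E : Multiset ((Σ i : Fin n, Σ j : Fin (m i), Fin (l i j)) ×
                   (Σ i : Fin n, Σ j : Fin (m i), Fin (l i j)))) :
    -- (1)
    claspM Sigma.fst
        (claspM (fun v => (⟨v.1, v.2.1⟩ : Σ i : Fin n, Fin (m i))) E)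
      = claspM Sigma.fst E
    ∧ -- (2)
    (∀ i : Fin n,
      inducedM (α := fun i => Fin (m i)) i ⟨0, hm i⟩
          (claspM (fun v => (⟨v.1, v.2.1⟩ : Σ i : Fin n, Fin (m i))) E)
        = claspM Sigma.fst
            (inducedM (α := fun i => Σ j : Fin (m i), Fin (l i j)) i
              ⟨⟨0, hm i⟩, ⟨0, hl i ⟨0, hm i⟩⟩⟩ E))
    ∧ -- (3)
    (∀ (i : Fin n) (j : Fin (m i)),
      inducedM (α := fun b : Σ i : Fin n, Fin (m i) => Fin (l b.1 b.2))
          ⟨i, j⟩ ⟨0, hl i j⟩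
          (E.map (Prod.map
            (fun v => (⟨⟨v.1, v.2.1⟩, v.2.2⟩ : Σ b : Σ i : Fin n, Fin (m i), Fin (l b.1 b.2)))
            (fun v => (⟨⟨v.1, v.2.1⟩, v.2.2⟩ : Σ b : Σ i : Fin n, Fin (m i), Fin (l b.1 b.2)))))
        = inducedM (α := fun j : Fin (m i) => Fin (l i j)) j ⟨0, hl i j⟩
            (inducedM (α := fun i => Σ j : Fin (m i), Fin (l i j)) i
              ⟨⟨0, hm i⟩, ⟨0, hl i ⟨0, hm i⟩⟩⟩ E)) := by
  refine ⟨?_, fun i => ?_, fun i j => ?_⟩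
  · rw [claspM_eq, claspM_eq, claspM_eq, Multiset.filterMap_filterMap]
    congr 1
    funext p
    obtain ⟨a, b⟩ := p
    dsimp only
    by_cases h : a.1 = b.1
    · split_ifs with h2 <;> simp_all [Sigma.ext_iff]
    · split_ifs with h2 <;> simp_all [Sigma.ext_iff]
  · rw [claspM_eq, inducedM_eq, inducedM_eq, claspM_eq, Multiset.filterMap_filterMap,
      Multiset.filterMap_filterMap]
    congr 1
    funext p
    obtain ⟨⟨a1, a2⟩, ⟨b1, b2⟩⟩ := p
    dsimp only
    by_cases ha : a1 = i
    · by_cases hb : b1 = i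
      · subst ha; subst hb
        split_ifs <;> simp_all [Sigma.ext_iff, extr_same]
      · split_ifs <;> simp_all [Sigma.ext_iff]
    · split_ifs <;> simp_all [Sigma.ext_iff]
  · rw [inducedM_eq, inducedM_eq, inducedM_eq, Multiset.filterMap_map,
      Multiset.filterMap_filterMap]
    congr 1
    funext p
    obtain ⟨⟨a1, a2, a3⟩, ⟨b1, b2, b3⟩⟩ := p
    dsimp only [Function.comp, Prod.map]
    by_cases ha : a1 = i
    · by_cases hb : b1 = i
      · subst ha; subst hb
        by_cases ha2 : a2 = j
        · by_cases hb2 : b2 = j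
          · subst ha2; subst hb2
            split_ifs <;> simp_all [Sigma.ext_iff, extr_same]
          · split_ifs <;> simp_all [Sigma.ext_iff, extr_same]
        · split_ifs <;> simp_all [Sigma.ext_iff, extr_same]
      · split_ifs <;> simp_all [Sigma.ext_iff, extr_same]
    · split_ifs <;> simp_all [Sigma.ext_iff, extr_same]
end

section
/- The symmetric group action on graphs is coequivariant with the cocomposition: for σ ∈ Sₙ, τᵢ ∈ S_{mᵢ}, and Γ a graph on Σmᵢ vertices, one has Δ^{m_{σ⁻¹(1)}...m_{σ⁻¹(n)}}(σ(τ₁,...,τₙ)Γ) = (σΔ₀^{m₁...mₙ}(Γ), τ_{σ⁻¹(1)}Δ_{σ⁻¹(1)}^{m₁...mₙ}(Γ), ..., τ_{σ⁻¹(n)}Δ_{σ⁻¹(n)}^{m₁...mₙ}(Γ)), where σ(τ₁,...,τₙ) is the composite block permutation. -/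
private lemma eqRec_val {n : ℕ} {m' : Fin n → ℕ} {a b : Fin n} (h : a = b)
    (y : Fin (m' a)) : ((h ▸ y : Fin (m' b)) : ℕ) = (y : ℕ) := by
  subst h; rfl

/-- Coequivariance of the symmetric group actions with the cocomposition of graphs:
for `σ ∈ Sₙ`, `τᵢ ∈ S_{mᵢ}` and a graph `Γ` on `Σ i, Fin (m i)` (the vertex set
partitioned into `n` consecutive groups of sizes `mᵢ`), the block composite
permutation `σ(τ₁,…,τₙ)` sends a vertex `(i, x)` to `(σ i, τᵢ x)` (the `i`-th group,
of size `mᵢ`, becomes the `σ(i)`-th group of the relabelled graph, whose group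
sizes are `m'ᵢ = m_{σ⁻¹ i}`).  Then
`Δ^{m'}(σ(τ₁,…,τₙ)Γ) = (σ Δ₀^{m}(Γ), τ_{σ⁻¹ 1} Δ_{σ⁻¹ 1}^{m}(Γ), …, τ_{σ⁻¹ n} Δ_{σ⁻¹ n}^{m}(Γ))`. -/
theorem stmt11 (n : ℕ) (m : Fin n → ℕ) (hm : ∀ i, 0 < m i)
    (σ : Equiv.Perm (Fin n)) (τ : ∀ i : Fin n, Equiv.Perm (Fin (m i)))
    (E : Multiset ((Σ i : Fin n, Fin (m i)) × (Σ i : Fin n, Fin (m i))))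
    (m' : Fin n → ℕ) (hm' : ∀ i, m' i = m (σ.symm i))
    (P : (Σ i : Fin n, Fin (m i)) → (Σ i : Fin n, Fin (m' i)))
    (hP : ∀ v : Σ i : Fin n, Fin (m i),
        P v = ⟨σ v.1, Fin.cast (by rw [hm', Equiv.symm_apply_apply]) (τ v.1 v.2)⟩) :
    claspM Sigma.fst (E.map (Prod.map P P))
      = (claspM Sigma.fst E).map (Prod.map σ σ)
    ∧ ∀ i : Fin n,
        inducedM (α := fun i => Fin (m' i)) i ⟨0, by rw [hm']; exact hm _⟩
            (E.map (Prod.map P P))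
          = (inducedM (α := fun i => Fin (m i)) (σ.symm i) ⟨0, hm _⟩ E).map
              (Prod.map (fun x => Fin.cast (hm' i).symm (τ (σ.symm i) x))
                        (fun x => Fin.cast (hm' i).symm (τ (σ.symm i) x))) := by
  have hP1 : ∀ v, (P v).1 = σ v.1 := fun v => by rw [hP]
  constructor
  · unfold claspM
    rw [Multiset.map_map, Multiset.filter_map, Multiset.filter_map, Multiset.map_map]
    refine Multiset.map_congr (Multiset.filter_congr fun p _ => ?_) fun p _ => ?_
    · simp only [Function.comp, Prod.map, hP1]
      constructor
      · exact fun h h2 => h (by rw [h2])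
      · exact fun h h2 => h (σ.injective h2)
    · simp [Function.comp, Prod.map, hP1]
  · intro i
    unfold inducedM
    rw [Multiset.filter_map, Multiset.map_map, Multiset.map_map]
    have hcond : ∀ v : Σ j : Fin n, Fin (m j), (P v).1 = i ↔ v.1 = σ.symm i := by
      intro v; rw [hP1]; exact ⟨fun h => by rw [← h, Equiv.symm_apply_apply],
        fun h => by rw [h, Equiv.apply_symm_apply]⟩
    have hextr : ∀ (v : Σ j : Fin n, Fin (m j)) (h : v.1 = σ.symm i),
        extr (α := fun i => Fin (m' i)) i ⟨0, by rw [hm']; exact hm _⟩ (P v)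
          = Fin.cast (hm' i).symm
              (τ (σ.symm i) (extr (σ.symm i) ⟨0, hm _⟩ v)) := by
      rintro ⟨a, x⟩ h
      dsimp at h; subst h
      rw [hP]
      have hi : σ (σ.symm i) = i := Equiv.apply_symm_apply σ i
      apply Fin.ext
      rw [extr, dif_pos hi, eqRec_val hi]
      have : extr (σ.symm i) ⟨0, hm _⟩ (⟨σ.symm i, x⟩ : Σ j, Fin (m j)) = x := by
        rw [extr]; simp
      rw [this]
      rfl
    refine Multiset.map_congr (Multiset.filter_congr fun p _ => ?_) fun p hp => ?_
    · simp only [Function.comp, Prod.map, hcond]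
    · rw [Multiset.mem_filter] at hp
      simp only [Function.comp, Prod.map]
      rw [hextr p.1 hp.2.1, hextr p.2 hp.2.2]
end

section
/- For H = F[∂] with Δ(∂) = ∂⊗1 + 1⊗∂, an H-bilinear pseudobracket [a∗b] = Σᵢ (fᵢ(∂) ⊗ 1) ⊗_H eᵢ on an H-module L corresponds to the λ-bracket [a_λ b] = Σᵢ fᵢ(-λ)eᵢ, and under this correspondence the pseudo-skewsymmetry [b∗a] = -(σ ⊗_H id)[a∗b] is equivalent to the conformal skewsymmetry [a_λ b] = -[b_{-λ-∂} a] (in the purely even case). -/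
/-- For `H = F[∂]`, every element of `(H ⊗ H) ⊗_H L` can be written uniquely in the
normal form `Σᵢ (fᵢ(∂) ⊗ 1) ⊗_H eᵢ`, so an `H`-bilinear pseudobracket is encoded by
`β : L → L → (ℕ →₀ L)`, where `β a b n` is the coefficient of `∂ⁿ` (i.e.
`[a∗b] = Σₙ (∂ⁿ ⊗ 1) ⊗_H β a b n`), and `D : L → L` is the action of `∂`.  The
corresponding λ-bracket is `[a_λ b] = Σₙ λⁿ Λ a b n` where `Λ a b n = (-1)ⁿ β a b n`
(so `[a_λ b] = Σᵢ fᵢ(-λ) eᵢ`).  Under this correspondence the pseudo-skewsymmetry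
`[b∗a] = -(σ ⊗_H id)[a∗b]` — which, rewritten in normal form using
`(1 ⊗ ∂ⁿ) ⊗_H e = Σₖ C(n,k) ((-∂)ᵏ ⊗ 1) ⊗_H ∂^{n-k} e`, reads
`β b a m = -(-1)^m Σₙ C(n,m) D^{n-m} (β a b n)` —
is equivalent to the conformal skewsymmetry `[a_λ b] = -[b_{-λ-∂} a]`, i.e.
`Λ a b k = - Σₙ C(n,k) (-1)^{n-k}(-1)^k D^{n-k} (Λ b a n)
         = - Σₙ C(n,k) (-1)^n D^{n-k} (Λ b a n)` (in the purely even case). -/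
theorem stmt17 (F : Type*) [Field F] [CharZero F]
    (L : Type*) [AddCommGroup L] [Module F L]
    (D : L →ₗ[F] L)
    (β : L → L → (ℕ →₀ L))
    (Λ : L → L → (ℕ →₀ L))
    (hΛ : ∀ (a b : L) (k : ℕ), Λ a b k = ((-1 : F) ^ k) • β a b k) :
    (∀ (a b : L) (k : ℕ),
        β b a k
          = -((-1 : F) ^ k) •
              (β a b).sum (fun n v => ((n.choose k : F)) • (D ^ (n - k)) v))
    ↔
    (∀ (a b : L) (k : ℕ),
        Λ a b k
          = - (Λ b a).sum (fun n v =>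
              (((-1 : F) ^ n * (n.choose k : F))) • (D ^ (n - k)) v)) := by
  have key : ∀ (a b : L) (k : ℕ),
      (Λ b a).sum (fun n v => (((-1 : F) ^ n * (n.choose k : F))) • (D ^ (n - k)) v)
        = (β b a).sum (fun n v => ((n.choose k : F)) • (D ^ (n - k)) v) := by
    intro a b k
    have hs : (Λ b a).support = (β b a).support := by
      ext n
      simp only [Finsupp.mem_support_iff, hΛ, ne_eq, smul_eq_zero, not_or,
        pow_eq_zero_iff, neg_eq_zero, one_ne_zero, false_and, not_false_eq_true,
        true_and]
      have hne : ((-1 : F) ^ n) ≠ 0 := pow_ne_zero _ (by norm_num)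
      tauto
    rw [Finsupp.sum, Finsupp.sum, hs]
    apply Finset.sum_congr rfl
    intro n _
    rw [hΛ, map_smul, smul_smul]
    congr 1
    have : ((-1 : F) ^ n) * ((-1 : F) ^ n) = 1 := by
      rw [← pow_add, Even.neg_one_pow ⟨n, rfl⟩]
    rw [mul_comm ((-1 : F) ^ n), mul_assoc, this, mul_one]
  have hone : ∀ k : ℕ, ((-1 : F) ^ k) * ((-1 : F) ^ k) = 1 := by
    intro k
    rw [← pow_add, Even.neg_one_pow ⟨k, rfl⟩]
  constructor
  · intro h a b k
    rw [key, hΛ, h b a k, smul_smul, mul_neg, hone, neg_smul, one_smul]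
  · intro h a b k
    have := h b a k
    rw [key b a k, hΛ] at this
    have h2 := congrArg (fun x => ((-1 : F) ^ k) • x) this
    simp only [smul_smul, hone, one_smul, smul_neg] at h2
    rw [h2, ← neg_smul]
end
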